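/- arXiv:1711.11088 — 6 statements merged into one kernel-verified Lean document; each statement's English description precedes it below -/
import Mathlib

section
/- If ψ : ℝⁿ → ℝ is a convex function such that ∫ e^{-ψ(x)} dx < ∞, then there exist γ > 0 and β ∈ ℝ such that ψ(x) ≥ γ‖x‖ + β for all x ∈ ℝⁿ. -/
/-!
The sublevel set `K = {ψ ≤ ψ 0 + 1}` is convex, contains a ball around `0`, and has finite
volume since `e^{-ψ} ≥ e^{-ψ 0 - 1}` on it. A convex set containing `B(x, δ)` and a point `y`
contains the balls `B(x + t (y - x), δ / 2)` for `t ≤ 1 / 2`, hence about `‖y - x‖ / δ` disjoint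
balls of equal volume; so `K ⊆ B(0, ρ)` for some `ρ`. Comparing `ψ` along the segment from `0` to
`x` with its value at the point of norm `ρ` gives `ψ x ≥ ψ 0 + ‖x‖ / ρ` for `‖x‖ ≥ ρ`, and `ψ` is
bounded below on the compact ball `B(0, ρ)`.
-/

open MeasureTheory Metric Set Bornology
open scoped ENNReal

theorem measure_le_lt_top_of_integrable_exp_neg {α : Type*} [MeasurableSpace α] {μ : Measure α}
    {f : α → ℝ} (hf : Integrable (fun x => Real.exp (-f x)) μ) (c : ℝ) :
    μ {x | f x ≤ c} < ∞ :=
  (measure_mono fun _ hx => Real.exp_le_exp.2 (neg_le_neg hx)).trans_lt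
    (hf.measure_ge_lt_top (Real.exp_pos (-c)))

section Geometry

variable {E : Type*} [NormedAddCommGroup E] [NormedSpace ℝ E]

theorem Convex.ball_add_smul_sub_subset {s : Set E} (hs : Convex ℝ s) {x y : E} {δ t : ℝ}
    (hball : ball x δ ⊆ s) (hy : y ∈ s) (ht₀ : 0 ≤ t) (ht₁ : t < 1) :
    ball (x + t • (y - x)) ((1 - t) * δ) ⊆ s := by
  intro z hz
  have h1t : 0 < 1 - t := sub_pos.2 ht₁
  set w := x + (1 - t)⁻¹ • (z - (x + t • (y - x)))
  have hw : w ∈ ball x δ := by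
    rw [mem_ball_iff_norm, add_sub_cancel_left, norm_smul, norm_inv, Real.norm_of_nonneg h1t.le,
      inv_mul_lt_iff₀ h1t, ← dist_eq_norm]
    exact hz
  have hz_eq : t • y + (1 - t) • w = z := by
    simp only [w, smul_add, smul_smul, mul_inv_cancel₀ h1t.ne', one_smul]
    simp only [sub_smul, one_smul, smul_sub]
    abel
  exact hz_eq ▸ hs hy (hball hw) ht₀ h1t.le (add_sub_cancel t 1)

variable [MeasurableSpace E] [BorelSpace E]

theorem natCast_mul_measure_ball_le_of_forall_ball_subset (μ : Measure E) [μ.IsAddHaarMeasure]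
    {s : Set E} {x v : E} {r : ℝ} {N : ℕ} (hv : 2 * r ≤ ‖v‖)
    (hsub : ∀ j < N, ball (x + (j : ℝ) • v) r ⊆ s) :
    (N : ℝ≥0∞) * μ (ball x r) ≤ μ s := by
  have hdisj : (Finset.range N : Set ℕ).PairwiseDisjoint fun j : ℕ => ball (x + (j : ℝ) • v) r := by
    intro i _ j _ hij
    refine ball_disjoint_ball ?_
    have hij' : (1 : ℝ) ≤ |(i : ℝ) - j| := by
      have : (1 : ℤ) ≤ |(i : ℤ) - j| := Int.one_le_abs (sub_ne_zero.2 (by exact_mod_cast hij))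
      exact_mod_cast this
    rw [dist_add_left, dist_eq_norm, ← sub_smul, norm_smul, Real.norm_eq_abs]
    nlinarith [norm_nonneg v]
  calc (N : ℝ≥0∞) * μ (ball x r)
      = ∑ j ∈ Finset.range N, μ (ball (x + (j : ℝ) • v) r) := by
        simp only [Measure.addHaar_ball_center μ, Finset.sum_const, Finset.card_range, nsmul_eq_mul]
    _ = μ (⋃ j ∈ Finset.range N, ball (x + (j : ℝ) • v) r) :=
        (measure_biUnion_finset hdisj fun _ _ => measurableSet_ball).symm
    _ ≤ μ s := measure_mono <| iUnion₂_subset fun j hj => hsub j (Finset.mem_range.1 hj)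

theorem Convex.isBounded_of_measure_ne_top (μ : Measure E) [μ.IsAddHaarMeasure] {s : Set E}
    (hs : Convex ℝ s) (hint : (interior s).Nonempty) (hμ : μ s ≠ ∞) : IsBounded s := by
  obtain ⟨x, hx⟩ := hint
  obtain ⟨δ, hδ, hball⟩ := Metric.isOpen_iff.1 isOpen_interior x hx
  have hball' : ball x δ ⊆ s := hball.trans interior_subset
  obtain ⟨N, hN⟩ := ENNReal.exists_nat_mul_gt (measure_ball_pos μ x (half_pos hδ)).ne' hμ
  refine (isBounded_iff_subset_closedBall x).2 ⟨2 * N * δ, fun y hy => ?_⟩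
  by_contra hfar
  have hd : 2 * N * δ < ‖y - x‖ := by simpa [dist_eq_norm] using hfar
  have hd₀ : 0 < ‖y - x‖ := lt_of_le_of_lt (by positivity) hd
  -- `N` disjoint balls of radius `δ / 2`, centred on the segment from `x` towards `y`, fit in `s`
  refine hN.not_ge (natCast_mul_measure_ball_le_of_forall_ball_subset μ
    (v := (δ / ‖y - x‖) • (y - x)) ?_ fun j hj => ?_)
  · rw [norm_smul, Real.norm_of_nonneg (by positivity), div_mul_cancel₀ _ hd₀.ne']
    linarith
  · have ht : (j : ℝ) * (δ / ‖y - x‖) ≤ 1 / 2 := by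
      rw [mul_div_assoc', div_le_iff₀ hd₀]
      have : (j : ℝ) ≤ N := by exact_mod_cast hj.le
      nlinarith
    rw [smul_smul]
    refine (ball_subset_ball ?_).trans
      (hs.ball_add_smul_sub_subset hball' hy (by positivity) (by linarith))
    nlinarith

end Geometry

section ConvexFunction

variable {E : Type*} [NormedAddCommGroup E] [NormedSpace ℝ E] {ψ : E → ℝ} {c : ℝ}

theorem ConvexOn.add_mul_norm_le_of_sublevel_subset_ball (hψ : ConvexOn ℝ univ ψ) {ρ : ℝ}
    (hρ₀ : 0 < ρ) (hρ : ∀ y, ψ y ≤ c → ‖y‖ < ρ) {x : E} (hx : ρ ≤ ‖x‖) :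
    ψ 0 + (c - ψ 0) / ρ * ‖x‖ ≤ ψ x := by
  have hx₀ : 0 < ‖x‖ := hρ₀.trans_le hx
  set t := ρ / ‖x‖
  have ht₀ : 0 < t := by positivity
  have ht₁ : 0 ≤ 1 - t := by rw [sub_nonneg, div_le_one hx₀]; exact hx
  have hnorm : ‖t • x‖ = ρ := by
    rw [norm_smul, Real.norm_of_nonneg ht₀.le, div_mul_cancel₀ _ hx₀.ne']
  have hc : c < ψ (t • x) := lt_of_not_ge fun h => (hρ _ h).ne hnorm
  have hconv : ψ (t • x) ≤ t * ψ x + (1 - t) * ψ 0 := by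
    simpa using hψ.2 (mem_univ x) (mem_univ 0) ht₀.le ht₁ (add_sub_cancel t 1)
  have key : c - ψ 0 ≤ t * (ψ x - ψ 0) := by linarith
  have : (c - ψ 0) / ρ * ‖x‖ ≤ ψ x - ψ 0 :=
    calc (c - ψ 0) / ρ * ‖x‖ ≤ t * (ψ x - ψ 0) / ρ * ‖x‖ := by gcongr
      _ = ψ x - ψ 0 := by simp only [t]; field_simp
  linarith

theorem ConvexOn.exists_linear_lower_bound_of_isBounded_sublevel [FiniteDimensional ℝ E]
    (hψ : ConvexOn ℝ univ ψ) (hc : ψ 0 < c) (hbdd : IsBounded {x | ψ x ≤ c}) :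
    ∃ γ : ℝ, 0 < γ ∧ ∃ β : ℝ, ∀ x, γ * ‖x‖ + β ≤ ψ x := by
  obtain ⟨R, hR⟩ := (isBounded_iff_subset_closedBall 0).1 hbdd
  set ρ := |R| + 1
  have hρ₀ : 0 < ρ := by positivity
  have hρ : ∀ y, ψ y ≤ c → ‖y‖ < ρ := fun y hy => by
    have := mem_closedBall_zero_iff.1 (hR hy)
    linarith [le_abs_self R]
  have hcont : ContinuousOn ψ (closedBall 0 ρ) :=
    (hψ.continuousOn isOpen_univ).mono (subset_univ _)
  obtain ⟨m, hm⟩ := (isCompact_closedBall (0 : E) ρ).bddBelow_image hcont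
  refine ⟨(c - ψ 0) / ρ, by have := sub_pos.2 hc; positivity, min (ψ 0) (m - (c - ψ 0)),
    fun x => ?_⟩
  rcases le_total ‖x‖ ρ with hx | hx
  · have hmx : m ≤ ψ x := hm ⟨x, mem_closedBall_zero_iff.2 hx, rfl⟩
    have : (c - ψ 0) / ρ * ‖x‖ ≤ c - ψ 0 := by
      rw [div_mul_eq_mul_div, div_le_iff₀ hρ₀]
      exact mul_le_mul_of_nonneg_left hx (sub_pos.2 hc).le
    linarith [min_le_right (ψ 0) (m - (c - ψ 0))]
  · linarith [min_le_left (ψ 0) (m - (c - ψ 0)),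
      hψ.add_mul_norm_le_of_sublevel_subset_ball hρ₀ hρ hx]

end ConvexFunction

/-- If `ψ : ℝⁿ → ℝ` is convex with `∫ e^{-ψ} dx < ∞`, then there are `γ > 0` and `β ∈ ℝ`
with `ψ x ≥ γ‖x‖ + β` for all `x`. -/
theorem exists_linear_lower_bound_of_integrable
    (n : ℕ) (ψ : EuclideanSpace ℝ (Fin n) → ℝ)
    (hconv : ConvexOn ℝ Set.univ ψ)
    (hint : Integrable (fun x => Real.exp (-ψ x))) :
    ∃ γ : ℝ, 0 < γ ∧ ∃ β : ℝ, ∀ x, γ * ‖x‖ + β ≤ ψ x := by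
  have hcont : Continuous ψ := continuousOn_univ.1 (hconv.continuousOn isOpen_univ)
  have hc : ψ 0 < ψ 0 + 1 := lt_add_one _
  have hinterior : (0 : EuclideanSpace ℝ (Fin n)) ∈ interior {x | ψ x ≤ ψ 0 + 1} :=
    IsOpen.subset_interior_iff (isOpen_lt hcont continuous_const) |>.2
      (fun x (hx : ψ x < ψ 0 + 1) => hx.le) hc
  have hconvex : Convex ℝ {x | ψ x ≤ ψ 0 + 1} := by simpa using hconv.convex_le (ψ 0 + 1)
  have hbdd : IsBounded {x | ψ x ≤ ψ 0 + 1} :=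
    hconvex.isBounded_of_measure_ne_top volume ⟨0, hinterior⟩
      (measure_le_lt_top_of_integrable_exp_neg hint _).ne
  exact hconv.exists_linear_lower_bound_of_isBounded_sublevel hc hbdd
end

section
/- If ψ : ℝⁿ → ℝ is convex with 0 < ∫ e^{-ψ(x)} dx < ∞, then ψ(x) → ∞ as ‖x‖ → ∞ (ψ is coercive). -/
/-!
If `ψ` were not coercive, some sublevel set `{ψ ≤ B}` would be unbounded, and after enlarging `B`
it also contains a ball `closedBall 0 r`, by continuity of `ψ`. This set is closed and convex, so by
compactness of the unit sphere it contains a whole ray from `0`, and then by convexity the balls of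
radius `r / 2` centred on that ray: infinitely many disjoint balls of the same volume. Hence
`{ψ ≤ B}` has infinite volume, whereas Markov's inequality bounds it by `e^B ∫ e^{-ψ}`.
-/

open MeasureTheory Filter Topology Metric Bornology

theorem tendsto_cocompact_atTop_of_isBounded_sublevel {X : Type*} [PseudoMetricSpace X]
    [ProperSpace X] {f : X → ℝ} (h : ∀ M, IsBounded {x | f x ≤ M}) :
    Tendsto f (cocompact X) atTop := by
  rw [← cobounded_eq_cocompact, atTop_basis_Ioi.tendsto_right_iff]
  intro M _
  show {x | M < f x} ∈ cobounded X
  rw [← isCobounded_def, ← isBounded_compl_iff]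
  simpa [Set.compl_def] using h M

theorem measure_sublevel_lt_top_of_integrable_exp_neg {α : Type*} [MeasurableSpace α]
    {μ : Measure α} {ψ : α → ℝ} (h : Integrable (fun x => Real.exp (-ψ x)) μ) (B : ℝ) :
    μ {x | ψ x ≤ B} < ⊤ := by
  refine (measure_mono fun x (hx : ψ x ≤ B) => ?_).trans_lt
    (h.measure_norm_ge_lt_top (Real.exp_pos (-B)))
  simpa [Real.norm_eq_abs, abs_of_pos (Real.exp_pos _)] using hx

section Ray

variable {E : Type*} [NormedAddCommGroup E] [NormedSpace ℝ E]

theorem Convex.exists_ray_subset_of_not_isBounded [ProperSpace E] {s : Set E}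
    (hs : Convex ℝ s) (hclosed : IsClosed s) (hunb : ¬IsBounded s) {x : E} (hx : x ∈ s) :
    ∃ v : E, ‖v‖ = 1 ∧ ∀ t : ℝ, 0 ≤ t → x + t • v ∈ s := by
  have hfar : ∀ k : ℕ, ∃ y ∈ s, (k : ℝ) < ‖y - x‖ := by
    intro k
    by_contra! hnear
    exact hunb ((isBounded_closedBall (x := x) (r := k)).subset fun y hy =>
      mem_closedBall_iff_norm.mpr (hnear y hy))
  choose y hys hyk using hfar
  have hypos : ∀ k, 0 < ‖y k - x‖ := fun k => (Nat.cast_nonneg k).trans_lt (hyk k)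
  set d : ℕ → E := fun k => ‖y k - x‖⁻¹ • (y k - x)
  have hd : ∀ k, d k ∈ sphere (0 : E) 1 := fun k => by
    simp [d, norm_smul, (hypos k).ne']
  obtain ⟨v, hv, φ, hφ, hφv⟩ := (isCompact_sphere (0 : E) 1).tendsto_subseq hd
  refine ⟨v, mem_sphere_zero_iff_norm.mp hv, fun t ht => ?_⟩
  have hlim : Tendsto (fun k => x + t • d (φ k)) atTop (𝓝 (x + t • v)) :=
    tendsto_const_nhds.add (tendsto_const_nhds.smul hφv)
  refine hclosed.mem_of_tendsto hlim ?_
  filter_upwards [eventually_ge_atTop ⌈t⌉₊] with k hk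
  have htk : t ≤ ‖y (φ k) - x‖ := calc
    t ≤ ⌈t⌉₊ := Nat.le_ceil t
    _ ≤ k := by exact_mod_cast hk
    _ ≤ φ k := by exact_mod_cast hφ.le_apply
    _ ≤ ‖y (φ k) - x‖ := (hyk (φ k)).le
  have hseg : x + t • d (φ k) ∈ segment ℝ x (y (φ k)) := by
    refine ⟨1 - t / ‖y (φ k) - x‖, t / ‖y (φ k) - x‖, ?_, by positivity, by ring, ?_⟩
    · linarith [div_le_one_of_le₀ htk (norm_nonneg _)]
    · simp only [d, smul_smul, div_eq_mul_inv]
      module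
  exact hs.segment_subset hx (hys _) hseg

theorem Convex.closedBall_half_subset_of_ray_subset {s : Set E} (hs : Convex ℝ s) {x v : E}
    {r : ℝ} (hball : closedBall x r ⊆ s) (hray : ∀ t : ℝ, 0 ≤ t → x + t • v ∈ s) {t : ℝ}
    (ht : 0 ≤ t) : closedBall (x + t • v) (r / 2) ⊆ s := by
  intro q hq
  have ha : (2 : ℝ) • (q - (x + t • v)) + x ∈ s := hball <| by
    rw [mem_closedBall_iff_norm, add_sub_cancel_right, norm_smul, Real.norm_two]
    linarith [mem_closedBall_iff_norm.mp hq]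
  convert hs ha (hray (2 * t) (by positivity)) (by norm_num : (0 : ℝ) ≤ 1 / 2)
    (by norm_num : (0 : ℝ) ≤ 1 / 2) (by norm_num) using 1
  module

theorem measure_eq_top_of_closedBall_subset_along_ray [MeasurableSpace E] [BorelSpace E]
    (μ : Measure E) [μ.IsAddHaarMeasure] {s : Set E} {x v : E}
    (hv : ‖v‖ = 1) {ρ : ℝ} (hρ : 0 < ρ) (h : ∀ t : ℝ, 0 ≤ t → closedBall (x + t • v) ρ ⊆ s) :
    μ s = ⊤ := by
  set c : ℕ → E := fun k => x + (3 * ρ * k) • v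
  have hdisj : Pairwise (Function.onFun Disjoint fun k => closedBall (c k) ρ) := by
    intro j k hjk
    apply closedBall_disjoint_closedBall
    have h1 : (1 : ℝ) ≤ |(j : ℝ) - k| := by
      exact_mod_cast Int.one_le_abs (sub_ne_zero.mpr (Int.natCast_inj.not.mpr hjk))
    have : dist (c j) (c k) = 3 * ρ * |(j : ℝ) - k| := by
      rw [dist_eq_norm, add_sub_add_left_eq_sub, ← sub_smul, norm_smul, hv, mul_one,
        Real.norm_eq_abs, ← mul_sub, abs_mul, abs_of_pos (by positivity : 0 < 3 * ρ)]
    rw [this]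
    nlinarith
  have hunion : μ (⋃ k, closedBall (c k) ρ) = ⊤ := by
    rw [measure_iUnion hdisj fun k => measurableSet_closedBall]
    simp_rw [Measure.addHaar_closedBall_center μ (c _) ρ]
    exact ENNReal.tsum_const_eq_top_of_ne_zero (measure_closedBall_pos μ 0 hρ).ne'
  exact top_le_iff.mp (hunion ▸ measure_mono (Set.iUnion_subset fun k => h _ (by positivity)))

end Ray

theorem ConvexOn.tendsto_cocompact_atTop_of_integrable_exp_neg {E : Type*}
    [NormedAddCommGroup E] [NormedSpace ℝ E] [FiniteDimensional ℝ E] [MeasurableSpace E]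
    [BorelSpace E] {μ : Measure E} [μ.IsAddHaarMeasure] {ψ : E → ℝ}
    (hconv : ConvexOn ℝ Set.univ ψ) (hint : Integrable (fun x => Real.exp (-ψ x)) μ) :
    Tendsto ψ (cocompact E) atTop := by
  have hcont : Continuous ψ := continuousOn_univ.mp (hconv.continuousOn isOpen_univ)
  obtain ⟨r, hr, hball⟩ : ∃ r > 0, closedBall 0 r ⊆ {x | ψ x ≤ ψ 0 + 1} :=
    nhds_basis_closedBall.mem_iff.mp
      (hcont.continuousAt.preimage_mem_nhds (Iic_mem_nhds (lt_add_one _)))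
  refine tendsto_cocompact_atTop_of_isBounded_sublevel fun M => ?_
  by_contra hunb
  set B := max M (ψ 0 + 1)
  have hconvB : Convex ℝ {x | ψ x ≤ B} := by simpa using hconv.convex_le B
  have hsub : ∀ a ≤ B, {x | ψ x ≤ a} ⊆ {x | ψ x ≤ B} := fun a ha x (hx : ψ x ≤ a) => hx.trans ha
  have hballB : closedBall 0 r ⊆ {x | ψ x ≤ B} := hball.trans (hsub _ (le_max_right _ _))
  obtain ⟨v, hv, hray⟩ := hconvB.exists_ray_subset_of_not_isBounded
    (isClosed_le hcont continuous_const) (fun h => hunb (h.subset (hsub M (le_max_left _ _))))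
    (hballB (mem_closedBall_self hr.le))
  refine (measure_sublevel_lt_top_of_integrable_exp_neg hint B).ne ?_
  exact measure_eq_top_of_closedBall_subset_along_ray μ hv (half_pos hr) fun t ht =>
    hconvB.closedBall_half_subset_of_ray_subset hballB hray ht

theorem coercive_of_integrable_general
    (n : ℕ) (ψ : EuclideanSpace ℝ (Fin n) → ℝ)
    (hconv : ConvexOn ℝ Set.univ ψ)
    (hint : Integrable (fun x => Real.exp (-ψ x))) :
    Tendsto ψ (cocompact (EuclideanSpace ℝ (Fin n))) atTop :=
  hconv.tendsto_cocompact_atTop_of_integrable_exp_neg hint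

/-- If `ψ : ℝⁿ → ℝ` is convex with `0 < ∫ e^{-ψ} dx < ∞`, then `ψ(x) → ∞` as `‖x‖ → ∞`. -/
theorem coercive_of_integrable
    (n : ℕ) (ψ : EuclideanSpace ℝ (Fin n) → ℝ)
    (hconv : ConvexOn ℝ Set.univ ψ)
    (hint : Integrable (fun x => Real.exp (-ψ x)))
    (hpos : 0 < ∫ x, Real.exp (-ψ x)) :
    Tendsto ψ (cocompact (EuclideanSpace ℝ (Fin n))) atTop :=
  coercive_of_integrable_general n ψ hconv hint
end

section
/- For a one-variable convex function g : ℝ → ℝ with e^{-g} integrable, if m ∈ ℝ is a point where g attains its minimum, then ∫_{ℝ} e^{-g(t)} |g'(t)| dt = 2 e^{-g(m)}. -/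
/-!
On `[m, ∞)` the convex function `g` is nondecreasing, so almost everywhere there `|g'|` equals the
right derivative `g'₊`, which exists everywhere; and `e^{-g} g'₊ ≥ 0` is the right derivative of
`-e^{-g}`. Since `e^{-g}` is integrable and eventually nonincreasing it tends to `0` at `+∞`, so the
fundamental theorem of calculus for right derivatives gives `∫_{(m, ∞)} e^{-g} |g'| = e^{-g(m)}`.
The half-line `(-∞, m]` is the same computation for `t ↦ g (-t)`.
-/

open MeasureTheory Set Filter Topology

section ImproperFTC

variable {f f' : ℝ → ℝ} {a l : ℝ}

theorem intervalIntegral.integral_eq_sub_of_hasDeriv_right_of_nonneg {b : ℝ} (hab : a ≤ b)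
    (hcont : ContinuousOn f (Icc a b)) (hderiv : ∀ x ∈ Ioo a b, HasDerivWithinAt f (f' x) (Ioi x) x)
    (hf' : ∀ x ∈ Ioo a b, 0 ≤ f' x) : ∫ x in a..b, f' x = f b - f a :=
  integral_eq_sub_of_hasDeriv_right_of_le hab hcont hderiv <|
    (intervalIntegrable_iff_integrableOn_Ioc_of_le hab).2 <|
      integrableOn_deriv_right_of_nonneg hcont hderiv hf'

theorem tendsto_intervalIntegral_of_hasDeriv_right_of_nonneg (hcont : ContinuousOn f (Ici a))
    (hderiv : ∀ x ∈ Ioi a, HasDerivWithinAt f (f' x) (Ioi x) x) (hf' : ∀ x ∈ Ioi a, 0 ≤ f' x)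
    (hf : Tendsto f atTop (𝓝 l)) :
    Tendsto (fun b => ∫ x in a..b, f' x) atTop (𝓝 (l - f a)) := by
  refine (hf.sub_const _).congr' ?_
  filter_upwards [eventually_ge_atTop a] with b hab
  exact (intervalIntegral.integral_eq_sub_of_hasDeriv_right_of_nonneg hab
    (hcont.mono Icc_subset_Ici_self) (fun x hx => hderiv x hx.1) (fun x hx => hf' x hx.1)).symm

theorem integrableOn_Ioi_deriv_right_of_nonneg (hcont : ContinuousOn f (Ici a))
    (hderiv : ∀ x ∈ Ioi a, HasDerivWithinAt f (f' x) (Ioi x) x) (hf' : ∀ x ∈ Ioi a, 0 ≤ f' x)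
    (hf : Tendsto f atTop (𝓝 l)) : IntegrableOn f' (Ioi a) := by
  refine integrableOn_Ioi_of_intervalIntegral_norm_tendsto _ a (fun b => ?_) tendsto_id
    ((tendsto_intervalIntegral_of_hasDeriv_right_of_nonneg hcont hderiv hf' hf).congr' ?_)
  · exact intervalIntegral.integrableOn_deriv_right_of_nonneg (hcont.mono Icc_subset_Ici_self)
      (fun x hx => hderiv x hx.1) (fun x hx => hf' x hx.1)
  · filter_upwards [eventually_ge_atTop a] with b hab
    rw [id_eq, intervalIntegral.integral_of_le hab, intervalIntegral.integral_of_le hab]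
    exact setIntegral_congr_fun measurableSet_Ioc fun x hx =>
      (Real.norm_of_nonneg (hf' x hx.1)).symm

theorem integral_Ioi_of_hasDeriv_right_of_nonneg (hcont : ContinuousOn f (Ici a))
    (hderiv : ∀ x ∈ Ioi a, HasDerivWithinAt f (f' x) (Ioi x) x) (hf' : ∀ x ∈ Ioi a, 0 ≤ f' x)
    (hf : Tendsto f atTop (𝓝 l)) : ∫ x in Ioi a, f' x = l - f a :=
  tendsto_nhds_unique (intervalIntegral_tendsto_integral_Ioi a
    (integrableOn_Ioi_deriv_right_of_nonneg hcont hderiv hf' hf) tendsto_id)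
    (tendsto_intervalIntegral_of_hasDeriv_right_of_nonneg hcont hderiv hf' hf)

end ImproperFTC

theorem AntitoneOn.tendsto_atTop_zero_of_integrableOn {f : ℝ → ℝ} {a : ℝ}
    (hf : AntitoneOn f (Ici a)) (hf₀ : ∀ x ∈ Ici a, 0 ≤ f x) (hint : IntegrableOn f (Ioi a)) :
    Tendsto f atTop (𝓝 0) := by
  refine tendsto_order.2 ⟨fun ε hε => ?_, fun ε hε => ?_⟩
  · filter_upwards [eventually_ge_atTop a] with x hx
    exact hε.trans_le (hf₀ x hx)
  · by_contra h
    have hge : ∀ x ∈ Ioi a, ε ≤ f x := fun x hx => not_lt.1 fun hlt => h <| by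
      filter_upwards [eventually_ge_atTop x] with y hy
      exact (hf (mem_Ici.2 hx.le) (mem_Ici.2 (hx.le.trans hy)) hy).trans_lt hlt
    have hconst : IntegrableOn (fun _ => ε) (Ioi a) :=
      hint.mono' aestronglyMeasurable_const <| (ae_restrict_mem measurableSet_Ioi).mono
        fun x hx => (Real.norm_of_nonneg hε.le).trans_le (hge x hx)
    simp [integrableOn_const_iff, hε.ne'] at hconst

namespace ConvexOn

variable {g : ℝ → ℝ} {m : ℝ}

protected theorem continuous (hg : ConvexOn ℝ univ g) : Continuous g :=
  continuousOn_univ.1 (hg.continuousOn isOpen_univ)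

theorem monotoneOn_Ici_of_forall_le (hg : ConvexOn ℝ univ g) (hm : ∀ t, g m ≤ g t) :
    MonotoneOn g (Ici m) := fun a ha b _ hab =>
  (hg.le_on_segment trivial trivial (by rw [segment_eq_Icc (ha.trans hab)]; exact ⟨ha, hab⟩)).trans
    (max_le (hm b) le_rfl)

theorem rightDeriv_nonneg_of_forall_le (hg : ConvexOn ℝ univ g) (hm : ∀ t, g m ≤ g t)
    {x : ℝ} (hx : m ≤ x) : 0 ≤ derivWithin g (Ioi x) x :=
  ((hg.monotoneOn_Ici_of_forall_le hm).mono (Ioi_subset_Ici hx)).derivWithin_nonneg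

theorem exp_neg_mul_abs_deriv_ae_eq (hg : ConvexOn ℝ univ g) (hm : ∀ t, g m ≤ g t) :
    (fun t => Real.exp (-g t) * |deriv g t|) =ᵐ[volume.restrict (Ioi m)]
      fun t => Real.exp (-g t) * derivWithin g (Ioi t) t := by
  have hmono := (hg.monotoneOn_Ici_of_forall_le hm).mono Ioi_subset_Ici_self
  filter_upwards [hmono.ae_differentiableWithinAt measurableSet_Ioi,
    ae_restrict_mem measurableSet_Ioi] with t hdiff ht
  rw [← (hdiff.differentiableAt (Ioi_mem_nhds ht)).derivWithin (uniqueDiffWithinAt_Ioi t),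
    abs_of_nonneg (hg.rightDeriv_nonneg_of_forall_le hm ht.le)]

theorem hasDerivWithinAt_neg_exp_neg (hg : ConvexOn ℝ univ g) (x : ℝ) :
    HasDerivWithinAt (fun t => -Real.exp (-g t)) (Real.exp (-g x) * derivWithin g (Ioi x) x)
      (Ioi x) x := by
  simpa using (hg.hasDerivWithinAt_rightDeriv_of_mem_interior (by simp)).fun_neg.exp.fun_neg

theorem tendsto_exp_neg_atTop (hg : ConvexOn ℝ univ g) (hm : ∀ t, g m ≤ g t)
    (hint : IntegrableOn (fun t => Real.exp (-g t)) (Ioi m)) :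
    Tendsto (fun t => Real.exp (-g t)) atTop (𝓝 0) :=
  AntitoneOn.tendsto_atTop_zero_of_integrableOn
    (fun _ ha _ hb hab =>
      Real.exp_le_exp.2 (neg_le_neg (hg.monotoneOn_Ici_of_forall_le hm ha hb hab)))
    (fun _ _ => (Real.exp_pos _).le) hint

theorem integrableOn_Ioi_exp_neg_mul_abs_deriv (hg : ConvexOn ℝ univ g) (hm : ∀ t, g m ≤ g t)
    (hint : IntegrableOn (fun t => Real.exp (-g t)) (Ioi m)) :
    IntegrableOn (fun t => Real.exp (-g t) * |deriv g t|) (Ioi m) :=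
  (integrableOn_Ioi_deriv_right_of_nonneg (f := fun t => -Real.exp (-g t))
    hg.continuous.neg.rexp.neg.continuousOn
    (fun x _ => hg.hasDerivWithinAt_neg_exp_neg x)
    (fun x hx => mul_nonneg (Real.exp_pos _).le (hg.rightDeriv_nonneg_of_forall_le hm hx.le))
    (by simpa using (hg.tendsto_exp_neg_atTop hm hint).neg)).congr_fun_ae
    (hg.exp_neg_mul_abs_deriv_ae_eq hm).symm

theorem integral_Ioi_exp_neg_mul_abs_deriv (hg : ConvexOn ℝ univ g) (hm : ∀ t, g m ≤ g t)
    (hint : IntegrableOn (fun t => Real.exp (-g t)) (Ioi m)) :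
    ∫ t in Ioi m, Real.exp (-g t) * |deriv g t| = Real.exp (-g m) := by
  rw [integral_congr_ae (hg.exp_neg_mul_abs_deriv_ae_eq hm),
    integral_Ioi_of_hasDeriv_right_of_nonneg (f := fun t => -Real.exp (-g t))
      hg.continuous.neg.rexp.neg.continuousOn
      (fun x _ => hg.hasDerivWithinAt_neg_exp_neg x)
      (fun x hx => mul_nonneg (Real.exp_pos _).le (hg.rightDeriv_nonneg_of_forall_le hm hx.le))
      (by simpa using (hg.tendsto_exp_neg_atTop hm hint).neg), zero_sub, neg_neg]

theorem comp_neg (hg : ConvexOn ℝ univ g) : ConvexOn ℝ univ fun x => g (-x) :=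
  hg.comp_linearMap (-LinearMap.id)

theorem integrableOn_Iic_exp_neg_mul_abs_deriv (hg : ConvexOn ℝ univ g) (hm : ∀ t, g m ≤ g t)
    (hint : IntegrableOn (fun t => Real.exp (-g t)) (Iio m)) :
    IntegrableOn (fun t => Real.exp (-g t) * |deriv g t|) (Iic m) := by
  have hint' : IntegrableOn (fun t => Real.exp (-g (-t))) (Ioi (-m)) :=
    IntegrableOn.comp_neg_Ioi (c := -m) (by rwa [neg_neg])
  have := (hg.comp_neg.integrableOn_Ioi_exp_neg_mul_abs_deriv (by simpa using fun t => hm (-t))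
    hint').comp_neg_Iio
  simp only [deriv_comp_neg, abs_neg, neg_neg] at this
  rwa [integrableOn_Iic_iff_integrableOn_Iio]

theorem integral_Iic_exp_neg_mul_abs_deriv (hg : ConvexOn ℝ univ g) (hm : ∀ t, g m ≤ g t)
    (hint : IntegrableOn (fun t => Real.exp (-g t)) (Iio m)) :
    ∫ t in Iic m, Real.exp (-g t) * |deriv g t| = Real.exp (-g m) := by
  have hint' : IntegrableOn (fun t => Real.exp (-g (-t))) (Ioi (-m)) :=
    IntegrableOn.comp_neg_Ioi (c := -m) (by rwa [neg_neg])
  have hreflect := hg.comp_neg.integral_Ioi_exp_neg_mul_abs_deriv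
    (by simpa using fun t => hm (-t)) hint'
  have hsubst := integral_comp_neg_Ioi (-m) fun t => Real.exp (-g t) * |deriv g t|
  simp only [deriv_comp_neg, abs_neg, neg_neg] at hreflect hsubst
  rwa [← hsubst]

end ConvexOn

/-- For a convex `g : ℝ → ℝ` with `e^{-g}` integrable and a minimizer `m` of `g`,
`∫ e^{-g(t)} |g'(t)| dt = 2 e^{-g(m)}`. -/
theorem integral_exp_mul_abs_deriv_eq
    (g : ℝ → ℝ)
    (hconv : ConvexOn ℝ Set.univ g)
    (hint : Integrable (fun t => Real.exp (-g t)))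
    (m : ℝ) (hm : ∀ t, g m ≤ g t) :
    ∫ t, Real.exp (-g t) * |deriv g t| = 2 * Real.exp (-g m) := by
  rw [← intervalIntegral.integral_Iic_add_Ioi
      (hconv.integrableOn_Iic_exp_neg_mul_abs_deriv hm hint.integrableOn)
      (hconv.integrableOn_Ioi_exp_neg_mul_abs_deriv hm hint.integrableOn),
    hconv.integral_Iic_exp_neg_mul_abs_deriv hm hint.integrableOn,
    hconv.integral_Ioi_exp_neg_mul_abs_deriv hm hint.integrableOn, two_mul]
end

section
/- Let ℰ = {x ∈ ℝⁿ : Σᵢ (xᵢ/aᵢ)² ≤ 1} be an ellipsoid with semi-axes a₁,…,aₙ > 0, and for 0 < h ≤ aₙ let H_h⁻ = {x : xₙ ≥ aₙ - h}. Then vol_n(ℰ ∩ H_h⁻) ≤ (2^{(n+1)/2} vol_{n-1}(B₂^{n-1}) ∏_{i=1}^{n-1} aᵢ / ((n+1) aₙ^{(n-1)/2})) · h^{(n+1)/2}. -/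
open MeasureTheory Finset

/-!
Write `s = xₙ / aₙ`. Since `1 - s² ≤ 2 (1 - s)`, the cap lies in the cap of the paraboloid
`∑_{i<n} (xᵢ / aᵢ)² ≤ 2 (aₙ - xₙ) / aₙ`, which touches the ellipsoid at its vertex. By Fubini over
`xₙ`, the slice of the paraboloid at height `aₙ - u` is an ellipsoid with semi-axes
`aᵢ √(2u / aₙ)`, of volume `∏_{i<n} aᵢ · (2u / aₙ)^((n-1)/2) · vol(B₂^{n-1})`; integrating over
`u ∈ [0, h]` gives exactly the stated bound.
-/

theorem volume_setOf_sum_sq_le {ι : Type*} [Fintype ι] {c : ℝ} (hc : 0 ≤ c) :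
    volume {y : ι → ℝ | ∑ i, y i ^ 2 ≤ c} =
      ENNReal.ofReal (c ^ ((Fintype.card ι : ℝ) / 2)) *
        volume (Metric.ball (0 : EuclideanSpace ℝ ι) 1) := by
  have hball : {y : ι → ℝ | ∑ i, y i ^ 2 ≤ c} =
      WithLp.toLp 2 ⁻¹' Metric.closedBall (0 : EuclideanSpace ℝ ι) √c := by
    ext y
    simp [EuclideanSpace.norm_eq, Real.sqrt_le_sqrt_iff hc]
  rw [hball, (PiLp.volume_preserving_toLp ι).measure_preimage
      measurableSet_closedBall.nullMeasurableSet,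
    Measure.addHaar_closedBall _ _ (Real.sqrt_nonneg c), finrank_euclideanSpace,
    Real.sqrt_eq_rpow, ← Real.rpow_mul_natCast hc, one_div_mul_eq_div]

theorem volume_setOf_sum_div_sq_le {ι : Type*} [Fintype ι] {b : ι → ℝ} (hb : ∀ i, 0 < b i)
    {c : ℝ} (hc : 0 ≤ c) :
    volume {y : ι → ℝ | ∑ i, (y i / b i) ^ 2 ≤ c} =
      ENNReal.ofReal ((∏ i, b i) * c ^ ((Fintype.card ι : ℝ) / 2)) *
        volume (Metric.ball (0 : EuclideanSpace ℝ ι) 1) := by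
  classical
  let D : (ι → ℝ) →ₗ[ℝ] (ι → ℝ) := Matrix.toLin' (Matrix.diagonal fun i => (b i)⁻¹)
  have hdet : LinearMap.det D = (∏ i, b i)⁻¹ := by
    simp [D, LinearMap.det_toLin', Matrix.det_diagonal, prod_inv_distrib]
  have hprod : 0 < ∏ i, b i := prod_pos fun i _ => hb i
  have hpre : {y : ι → ℝ | ∑ i, (y i / b i) ^ 2 ≤ c} = D ⁻¹' {z | ∑ i, z i ^ 2 ≤ c} := by
    ext y
    simp [D, Matrix.mulVec_diagonal, div_eq_inv_mul]
  rw [hpre, Measure.addHaar_preimage_linearMap _ (by simp [hdet, hprod.ne']),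
    volume_setOf_sum_sq_le hc, hdet, inv_inv, abs_of_pos hprod, ← mul_assoc,
    ← ENNReal.ofReal_mul hprod.le]

theorem volume_setOf_mem_Icc_sum_div_sq_le {ι : Type*} [Fintype ι] {b : ι → ℝ}
    (hb : ∀ i, 0 < b i) {g : ℝ → ℝ} (hg : Continuous g) {α β : ℝ}
    (hg0 : ∀ t ∈ Set.Icc α β, 0 ≤ g t) :
    volume {p : ℝ × (ι → ℝ) | p.1 ∈ Set.Icc α β ∧ ∑ i, (p.2 i / b i) ^ 2 ≤ g p.1} =
      ENNReal.ofReal ((∏ i, b i) * ∫ t in Set.Icc α β, g t ^ ((Fintype.card ι : ℝ) / 2)) *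
        volume (Metric.ball (0 : EuclideanSpace ℝ ι) 1) := by
  set k : ℝ := (Fintype.card ι : ℝ) / 2
  have hmeas : MeasurableSet
      {p : ℝ × (ι → ℝ) | p.1 ∈ Set.Icc α β ∧ ∑ i, (p.2 i / b i) ^ 2 ≤ g p.1} :=
    (measurableSet_Icc.preimage measurable_fst).inter
      (measurableSet_le (by fun_prop) (hg.measurable.comp measurable_fst))
  have hslice : ∀ t, volume {y : ι → ℝ | t ∈ Set.Icc α β ∧ ∑ i, (y i / b i) ^ 2 ≤ g t} =
      (Set.Icc α β).indicator
        (fun t => ENNReal.ofReal ((∏ i, b i) * g t ^ k) *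
          volume (Metric.ball (0 : EuclideanSpace ℝ ι) 1)) t := by
    intro t
    by_cases ht : t ∈ Set.Icc α β
    · simp only [ht, true_and, Set.indicator_of_mem]
      exact volume_setOf_sum_div_sq_le hb (hg0 t ht)
    · simp [ht]
  have hint : IntegrableOn (fun t => (∏ i, b i) * g t ^ k) (Set.Icc α β) :=
    ((hg.rpow_const fun _ => Or.inr (by positivity)).const_mul _).integrableOn_Icc
  rw [Measure.volume_eq_prod, Measure.prod_apply hmeas]
  simp only [Set.preimage_ofPred_eq, hslice]
  rw [lintegral_indicator measurableSet_Icc, lintegral_mul_const' _ _ measure_ball_lt_top.ne,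
    ← ofReal_integral_eq_lintegral_ofReal hint, integral_const_mul]
  exact ae_restrict_of_forall_mem measurableSet_Icc fun t ht =>
    mul_nonneg (prod_nonneg fun i _ => (hb i).le) (Real.rpow_nonneg (hg0 t ht) k)

theorem integral_Icc_mul_sub_rpow {c p h : ℝ} (hc : 0 ≤ c) (hp : -1 < p) (hh : 0 ≤ h) (A : ℝ) :
    ∫ t in Set.Icc (A - h) A, (c * (A - t)) ^ p = c ^ p * (h ^ (p + 1) / (p + 1)) := by
  have hpow : ∫ u in (0 : ℝ)..h, (c * u) ^ p = ∫ u in (0 : ℝ)..h, c ^ p * u ^ p := by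
    refine intervalIntegral.integral_congr fun u hu => ?_
    rw [Set.uIcc_of_le hh] at hu
    exact Real.mul_rpow hc hu.1
  rw [integral_Icc_eq_integral_Ioc, ← intervalIntegral.integral_of_le (by linarith),
    intervalIntegral.integral_comp_sub_left (fun u => (c * u) ^ p), sub_self, sub_sub_cancel, hpow,
    intervalIntegral.integral_const_mul, integral_rpow (Or.inl hp),
    Real.zero_rpow (by linarith), sub_zero]

theorem volume_paraboloid_cap {ι : Type*} [Fintype ι] {b : ι → ℝ} (hb : ∀ i, 0 < b i)
    {A h : ℝ} (hA : 0 < A) (hh : 0 ≤ h) :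
    volume {p : ℝ × (ι → ℝ) |
        p.1 ∈ Set.Icc (A - h) A ∧ ∑ i, (p.2 i / b i) ^ 2 ≤ 2 / A * (A - p.1)} =
      ENNReal.ofReal (2 ^ (((Fintype.card ι : ℝ) + 2) / 2) *
        (volume (Metric.ball (0 : EuclideanSpace ℝ ι) 1)).toReal * (∏ i, b i) /
          (((Fintype.card ι : ℝ) + 2) * A ^ ((Fintype.card ι : ℝ) / 2)) *
        h ^ (((Fintype.card ι : ℝ) + 2) / 2)) := by
  have hprod : 0 < ∏ i, b i := prod_pos fun i _ => hb i
  have hk : (0 : ℝ) ≤ Fintype.card ι / 2 := by positivity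
  rw [volume_setOf_mem_Icc_sum_div_sq_le hb (by fun_prop)
      (fun t ht => mul_nonneg (by positivity) (sub_nonneg.2 ht.2)),
    integral_Icc_mul_sub_rpow (by positivity) (by linarith) hh,
    ← ENNReal.ofReal_toReal measure_ball_lt_top.ne, ← ENNReal.ofReal_mul (by positivity),
    ENNReal.toReal_ofReal ENNReal.toReal_nonneg]
  congr 1
  have hexp : ((Fintype.card ι : ℝ) + 2) / 2 = Fintype.card ι / 2 + 1 := by ring
  rw [hexp, Real.div_rpow zero_le_two hA.le, Real.rpow_add_one two_ne_zero,
    show (Fintype.card ι : ℝ) + 2 = 2 * (Fintype.card ι / 2 + 1) by ring]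
  have : 0 < A ^ ((Fintype.card ι : ℝ) / 2) := by positivity
  field_simp

theorem EuclideanSpace.volume_setOf_last_init_mem {m : ℕ} (T : Set (ℝ × (Fin m → ℝ))) :
    volume {x : EuclideanSpace ℝ (Fin (m + 1)) | (x (Fin.last m), fun j => x j.castSucc) ∈ T} =
      volume T := by
  let e := (MeasurableEquiv.toLp 2 (Fin (m + 1) → ℝ)).symm.trans
    (MeasurableEquiv.piFinSuccAbove (fun _ => ℝ) (Fin.last m))
  have he : MeasurePreserving e :=
    (volume_preserving_piFinSuccAbove (fun _ => ℝ) (Fin.last m)).comp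
      (PiLp.volume_preserving_ofLp (Fin (m + 1)))
  convert he.measure_preimage_equiv T using 2
  ext x
  simp [e, MeasurableEquiv.piFinSuccAbove, Fin.init_def]

theorem sum_init_div_sq_le_of_sum_div_sq_le_one {m : ℕ} {a x : Fin (m + 1) → ℝ}
    (ha : 0 < a (Fin.last m)) (hx : ∑ i, (x i / a i) ^ 2 ≤ 1) :
    x (Fin.last m) ≤ a (Fin.last m) ∧
      ∑ j : Fin m, (x j.castSucc / a j.castSucc) ^ 2 ≤
        2 / a (Fin.last m) * (a (Fin.last m) - x (Fin.last m)) := by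
  rw [Fin.sum_univ_castSucc] at hx
  set s := x (Fin.last m) / a (Fin.last m)
  have hinit : 0 ≤ ∑ j : Fin m, (x j.castSucc / a j.castSucc) ^ 2 := by positivity
  have hs : s ≤ 1 := by nlinarith
  have hrhs : 2 / a (Fin.last m) * (a (Fin.last m) - x (Fin.last m)) = 2 * (1 - s) := by
    simp only [s]
    field_simp
  refine ⟨(div_le_one ha).mp hs, ?_⟩
  nlinarith [sq_nonneg (1 - s)]

theorem Fin.prod_univ_erase_last {M : Type*} [CommMonoid M] {m : ℕ} (f : Fin (m + 1) → M) :
    ∏ i ∈ univ.erase (Fin.last m), f i = ∏ j : Fin m, f j.castSucc := by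
  rw [← compl_singleton, ← Fin.image_castSucc, prod_image fun i _ j _ => Fin.castSucc_inj.mp]

/-- Upper bound for the volume of a cap of an ellipsoid with semi-axes `a 0, …, a (n-1)`,
cut off by the hyperplane `xₙ = aₙ - h`. -/
theorem ellipsoid_cap_volume_upper_bound
    (n : ℕ) (hn : 0 < n) (a : Fin n → ℝ) (ha : ∀ i, 0 < a i)
    (h : ℝ) (hh0 : 0 < h) :
    volume ({x : EuclideanSpace ℝ (Fin n) | ∑ i, (x i / a i) ^ 2 ≤ 1} ∩
        {x : EuclideanSpace ℝ (Fin n) | a ⟨n - 1, by omega⟩ - h ≤ x ⟨n - 1, by omega⟩})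
      ≤ ENNReal.ofReal
        ((2 : ℝ) ^ (((n : ℝ) + 1) / 2) *
          (volume (Metric.ball (0 : EuclideanSpace ℝ (Fin (n - 1))) 1)).toReal *
          (∏ i ∈ Finset.univ.erase (⟨n - 1, by omega⟩ : Fin n), a i) /
            (((n : ℝ) + 1) * a ⟨n - 1, by omega⟩ ^ (((n : ℝ) - 1) / 2)) *
          h ^ (((n : ℝ) + 1) / 2)) := by
  obtain ⟨m, rfl⟩ : ∃ m, n = m + 1 := ⟨n - 1, by omega⟩
  have hlast : ∀ hm : m < m + 1, (⟨m, hm⟩ : Fin (m + 1)) = Fin.last m := fun _ => rfl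
  simp only [Nat.add_sub_cancel, hlast, Fin.prod_univ_erase_last]
  have hexp : ((m + 1 : ℕ) : ℝ) + 1 = m + 2 := by push_cast; ring
  rw [hexp, show ((m + 1 : ℕ) : ℝ) - 1 = m by push_cast; ring]
  calc _ ≤ volume {x : EuclideanSpace ℝ (Fin (m + 1)) |
          (x (Fin.last m), fun j => x j.castSucc) ∈ {p : ℝ × (Fin m → ℝ) |
            p.1 ∈ Set.Icc (a (Fin.last m) - h) (a (Fin.last m)) ∧
              ∑ j, (p.2 j / a j.castSucc) ^ 2 ≤ 2 / a (Fin.last m) * (a (Fin.last m) - p.1)}} := by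
        refine measure_mono fun x ⟨hx, hxh⟩ => ?_
        obtain ⟨hxA, hinit⟩ := sum_init_div_sq_le_of_sum_div_sq_le_one (ha _) hx
        exact ⟨⟨hxh, hxA⟩, hinit⟩
    _ = _ := by
        rw [EuclideanSpace.volume_setOf_last_init_mem,
          volume_paraboloid_cap (fun j => ha _) (ha _) hh0.le, Fintype.card_fin]
end

section
/- Let ψ : ℝⁿ → ℝ be convex with epigraph epi(ψ) ⊆ ℝ^{n+1}, and let δ > 0 be small enough that the floating set (epi(ψ))_δ is nonempty. Then there exists a unique convex function ψ_δ : ℝⁿ → ℝ with (epi(ψ))_δ = epi(ψ_δ), and ψ_δ ≥ ψ pointwise. -/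
open MeasureTheory RealInnerProductSpace

/-- The floating set `C_δ` of a closed convex set `C ⊆ ℝ^{n+1}`. -/
def floatingSet {m : ℕ} (C : Set (EuclideanSpace ℝ (Fin m))) (δ : ℝ) :
    Set (EuclideanSpace ℝ (Fin m)) :=
  ⋂₀ {S | ∃ (u : EuclideanSpace ℝ (Fin m)) (c : ℝ), ‖u‖ = 1 ∧
      S = {x | c ≤ ⟪x, u⟫} ∧
      volume ({x | ⟪x, u⟫ ≤ c} ∩ C) ≤ ENNReal.ofReal δ}

/-- The epigraph of `ψ : ℝⁿ → ℝ` viewed as a subset of `ℝ^{n+1}`;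
the first `n` coordinates are the argument and the last coordinate the height. -/
def epiSet {n : ℕ} (ψ : EuclideanSpace ℝ (Fin n) → ℝ) :
    Set (EuclideanSpace ℝ (Fin (n + 1))) :=
  {z | ψ (WithLp.toLp 2 (fun i : Fin n => z i.castSucc)) ≤ z (Fin.last n)}

/-!
A cap of `epi ψ` of finite volume has an upward normal `u`: otherwise it would contain
arbitrarily tall boxes above a cube on which `ψ` is bounded. Hence the half-space it cuts off,
`{c ≤ ⟪z, u⟫}`, is the epigraph of an affine function `halfSpaceFun u c`, and the floating set is
the epigraph of the upper envelope `φ` of these affine functions, which is convex. This envelope is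
finite: if `halfSpaceFun u c x` exceeded `max ψ` near `x` by more than `δ`, the cap would contain a
box of volume larger than `δ`. Separating points below the graph from the closed convex set
`epi ψ` by caps that miss it shows that such caps exist and that `epi φ ⊆ epi ψ`, i.e. `ψ ≤ φ`.
Uniqueness holds because a function is determined by its epigraph.
-/

open Set
open scoped ENNReal

local notation:max "ℝ^" n:max => EuclideanSpace ℝ (Fin n)

namespace EuclideanSpace

variable {n : ℕ}

def dropLast : ℝ^(n + 1) →ₗ[ℝ] ℝ^n where
  toFun z := WithLp.toLp 2 fun i => z i.castSucc
  map_add' _ _ := rfl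
  map_smul' _ _ := rfl

@[simp] lemma dropLast_apply (z : ℝ^(n + 1)) (i : Fin n) : dropLast z i = z i.castSucc := rfl

def snoc (x : ℝ^n) (t : ℝ) : ℝ^(n + 1) := WithLp.toLp 2 (Fin.snoc (α := fun _ => ℝ) x.ofLp t)

@[simp] lemma dropLast_snoc (x : ℝ^n) (t : ℝ) : dropLast (snoc x t) = x := by
  ext i; simp [snoc]

@[simp] lemma snoc_last (x : ℝ^n) (t : ℝ) : snoc x t (Fin.last n) = t := by
  simp [snoc]

lemma inner_eq_inner_dropLast_add (z u : ℝ^(n + 1)) :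
    ⟪z, u⟫ = ⟪dropLast z, dropLast u⟫ + z (Fin.last n) * u (Fin.last n) := by
  simp [PiLp.inner_apply, Fin.sum_univ_castSucc, mul_comm]

lemma norm_sq_eq_norm_dropLast_sq_add (u : ℝ^(n + 1)) :
    ‖u‖ ^ 2 = ‖dropLast u‖ ^ 2 + u (Fin.last n) ^ 2 := by
  rw [← real_inner_self_eq_norm_sq, ← real_inner_self_eq_norm_sq, inner_eq_inner_dropLast_add]
  ring

def box (a b : Fin n → ℝ) : Set ℝ^n := WithLp.ofLp ⁻¹' univ.pi fun j => Icc (a j) (b j)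

lemma mem_box {a b : Fin n → ℝ} {y : ℝ^n} : y ∈ box a b ↔ ∀ j, y j ∈ Icc (a j) (b j) := by
  simp only [box, mem_preimage, mem_univ_pi]

lemma volume_box (a b : Fin n → ℝ) : volume (box a b) = ∏ j, ENNReal.ofReal (b j - a j) := by
  rw [box, (PiLp.volume_preserving_ofLp _).measure_preimage
    (MeasurableSet.univ_pi fun _ => measurableSet_Icc).nullMeasurableSet, volume_pi_pi]
  simp [Real.volume_Icc]

lemma isCompact_box (a b : Fin n → ℝ) : IsCompact (box a b) :=
  (PiLp.homeomorph 2 _).isCompact_preimage.2 (isCompact_univ_pi fun _ => isCompact_Icc)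

lemma ofReal_le_volume_of_forall_mem (lo : Fin n → ℝ) (T L : ℝ) {S : Set ℝ^(n + 1)}
    (h : ∀ z, dropLast z ∈ box lo (lo + 1) → z (Fin.last n) ∈ Icc T (T + L) → z ∈ S) :
    ENNReal.ofReal L ≤ volume S :=
  calc ENNReal.ofReal L = volume (box (Fin.lastCases T lo) (Fin.lastCases (T + L) (lo + 1))) := by
        rw [volume_box, Fin.prod_univ_castSucc]; simp
    _ ≤ volume S := measure_mono fun z hz => h z
        (mem_box.2 fun j => by simpa using mem_box.1 hz j.castSucc)
        (by simpa using mem_box.1 hz (Fin.last n))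

noncomputable def signCorner (p v : ℝ^n) : Fin n → ℝ := fun j => if 0 ≤ v j then p j - 1 else p j

lemma inner_le_of_mem_box_signCorner {p v y : ℝ^n}
    (hy : y ∈ box (signCorner p v) (signCorner p v + 1)) : ⟪y, v⟫ ≤ ⟪p, v⟫ := by
  simp only [PiLp.inner_apply, RCLike.inner_apply, conj_trivial]
  refine Finset.sum_le_sum fun j _ => ?_
  have hyj := mem_box.1 hy j
  by_cases hv : 0 ≤ v j
  · simp only [signCorner, if_pos hv, Pi.add_apply, Pi.one_apply] at hyj
    exact mul_le_mul_of_nonneg_left (by linarith [hyj.2]) hv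
  · simp only [signCorner, if_neg hv, Pi.add_apply, Pi.one_apply] at hyj
    exact mul_le_mul_of_nonpos_left hyj.1 (le_of_not_ge hv)

lemma box_signCorner_subset (p v : ℝ^n) :
    box (signCorner p v) (signCorner p v + 1) ⊆ box (fun j => p j - 1) (fun j => p j + 1) := by
  intro y hy
  refine mem_box.2 fun j => ?_
  have hyj := mem_box.1 hy j
  simp only [signCorner, Pi.add_apply, Pi.one_apply] at hyj
  split_ifs at hyj <;> constructor <;> linarith [hyj.1, hyj.2]

end EuclideanSpace

open EuclideanSpace

section Epigraph

variable {n : ℕ}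

lemma mem_epiSet_iff {ψ : ℝ^n → ℝ} {z : ℝ^(n + 1)} :
    z ∈ epiSet ψ ↔ ψ (dropLast z) ≤ z (Fin.last n) := Iff.rfl

lemma snoc_mem_epiSet_iff {ψ : ℝ^n → ℝ} {x : ℝ^n} {t : ℝ} : snoc x t ∈ epiSet ψ ↔ ψ x ≤ t := by
  rw [mem_epiSet_iff, dropLast_snoc, snoc_last]

lemma epiSet_nonempty (ψ : ℝ^n → ℝ) : (epiSet ψ).Nonempty :=
  ⟨snoc 0 (ψ 0), snoc_mem_epiSet_iff.2 le_rfl⟩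

lemma le_of_epiSet_subset {φ ψ : ℝ^n → ℝ} (h : epiSet φ ⊆ epiSet ψ) (x : ℝ^n) : ψ x ≤ φ x :=
  snoc_mem_epiSet_iff.1 (h (snoc_mem_epiSet_iff.2 le_rfl))

lemma epiSet_injective : Function.Injective (epiSet (n := n)) := fun _ _ h =>
  funext fun x => le_antisymm (le_of_epiSet_subset h.ge x) (le_of_epiSet_subset h.le x)

lemma isClosed_epiSet {ψ : ℝ^n → ℝ} (hψ : Continuous ψ) : IsClosed (epiSet ψ) :=
  isClosed_le (hψ.comp dropLast.continuous_of_finiteDimensional) (by fun_prop)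

lemma convex_epiSet {ψ : ℝ^n → ℝ} (hψ : ConvexOn ℝ univ ψ) : Convex ℝ (epiSet ψ) := by
  intro z hz w hw a b ha hb hab
  simp only [mem_epiSet_iff, map_add, map_smul] at hz hw ⊢
  calc ψ (a • dropLast z + b • dropLast w) ≤ a * ψ (dropLast z) + b * ψ (dropLast w) :=
        hψ.2 (mem_univ _) (mem_univ _) ha hb hab
    _ ≤ a * z (Fin.last n) + b * w (Fin.last n) := by gcongr
    _ = (a • z + b • w) (Fin.last n) := rfl

end Epigraph

section Caps

variable {n : ℕ} {ψ : ℝ^n → ℝ}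

lemma pos_last_of_volume_ne_top (hψ : Continuous ψ) {u : ℝ^(n + 1)} {c : ℝ} (hu : ‖u‖ = 1)
    (hvol : volume ({z | ⟪z, u⟫ ≤ c} ∩ epiSet ψ) ≠ ∞) : 0 < u (Fin.last n) := by
  by_contra! hlast
  set R := |c|
  set lo := signCorner (-R • dropLast u) (dropLast u)
  obtain ⟨M, hM⟩ := (isCompact_box lo (lo + 1)).bddAbove_image hψ.continuousOn
  -- every point over the cube at `lo` and above height `max M |c|` lies in the cap and in `epi ψ`
  refine hvol (ENNReal.eq_top_of_forall_nnreal_le fun L => ?_)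
  rw [← ENNReal.ofReal_coe_nnreal]
  refine ofReal_le_volume_of_forall_mem lo (max M R) L fun z hz hzlast => ⟨?_, ?_⟩
  · have hbase : ⟪dropLast z, dropLast u⟫ ≤ -R * ‖dropLast u‖ ^ 2 := by
      simpa [real_inner_smul_left] using inner_le_of_mem_box_signCorner hz
    have hnorm : ‖dropLast u‖ ^ 2 + u (Fin.last n) ^ 2 = 1 := by
      rw [← norm_sq_eq_norm_dropLast_sq_add, hu, one_pow]
    have hR : R ≤ z (Fin.last n) := (le_max_right _ _).trans hzlast.1
    have hlast_ge : -1 ≤ u (Fin.last n) := by nlinarith [sq_nonneg ‖dropLast u‖]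
    have hheight : z (Fin.last n) * u (Fin.last n) ≤ -R * u (Fin.last n) ^ 2 := by
      nlinarith [mul_nonpos_of_nonneg_of_nonpos (sub_nonneg.2 hR) hlast,
        mul_nonpos_of_nonneg_of_nonpos (abs_nonneg c)
          (mul_nonpos_of_nonpos_of_nonneg hlast (neg_le_iff_add_nonneg.1 hlast_ge))]
    calc ⟪z, u⟫ = ⟪dropLast z, dropLast u⟫ + z (Fin.last n) * u (Fin.last n) :=
          inner_eq_inner_dropLast_add z u
      _ ≤ -R * ‖dropLast u‖ ^ 2 + -R * u (Fin.last n) ^ 2 := add_le_add hbase hheight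
      _ = -|c| := by rw [← mul_add, hnorm, mul_one]
      _ ≤ c := neg_abs_le c
  · exact (hM (mem_image_of_mem ψ hz)).trans ((le_max_left _ _).trans hzlast.1)

noncomputable def halfSpaceFun (u : ℝ^(n + 1)) (c : ℝ) (x : ℝ^n) : ℝ :=
  (c - ⟪x, dropLast u⟫) / u (Fin.last n)

lemma le_inner_iff_halfSpaceFun_le {u z : ℝ^(n + 1)} {c : ℝ} (hu : 0 < u (Fin.last n)) :
    c ≤ ⟪z, u⟫ ↔ halfSpaceFun u c (dropLast z) ≤ z (Fin.last n) := by
  rw [halfSpaceFun, div_le_iff₀ hu, inner_eq_inner_dropLast_add]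
  constructor <;> intro h <;> linarith

lemma halfSpaceFun_add_smul (u : ℝ^(n + 1)) (c : ℝ) (x y : ℝ^n) {a b : ℝ} (hab : a + b = 1) :
    halfSpaceFun u c (a • x + b • y) = a * halfSpaceFun u c x + b * halfSpaceFun u c y := by
  simp only [halfSpaceFun, inner_add_left, real_inner_smul_left]
  linear_combination (-c / u (Fin.last n)) * hab

lemma exists_ofReal_halfSpaceFun_sub_le_volume (hψ : Continuous ψ) (x : ℝ^n) :
    ∃ M, ∀ (u : ℝ^(n + 1)) (c : ℝ), 0 < u (Fin.last n) →
      ENNReal.ofReal (halfSpaceFun u c x - M) ≤ volume ({z | ⟪z, u⟫ ≤ c} ∩ epiSet ψ) := by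
  obtain ⟨M, hM⟩ := (isCompact_box (fun j => x j - 1) (fun j => x j + 1)).bddAbove_image
    hψ.continuousOn
  refine ⟨M, fun u c hu => ofReal_le_volume_of_forall_mem (signCorner x (dropLast u)) M _
    fun z hz hzlast => ⟨?_, ?_⟩⟩
  · have hbase := inner_le_of_mem_box_signCorner hz
    have hx : halfSpaceFun u c x * u (Fin.last n) = c - ⟪x, dropLast u⟫ :=
      div_mul_cancel₀ _ hu.ne'
    have hlast : z (Fin.last n) * u (Fin.last n) ≤ halfSpaceFun u c x * u (Fin.last n) :=
      mul_le_mul_of_nonneg_right (by linarith [hzlast.2]) hu.le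
    rw [mem_ofPred_eq, inner_eq_inner_dropLast_add]
    linarith
  · exact (hM (mem_image_of_mem ψ (box_signCorner_subset _ _ hz))).trans hzlast.1

end Caps

section Envelope

variable {n : ℕ}

noncomputable def envelope (S : Set (ℝ^(n + 1) × ℝ)) (x : ℝ^n) : ℝ :=
  ⨆ p : S, halfSpaceFun p.1.1 p.1.2 x

variable {S : Set (ℝ^(n + 1) × ℝ)} [Nonempty S]

lemma epiSet_envelope (hbdd : ∀ x, BddAbove (range fun p : S => halfSpaceFun p.1.1 p.1.2 x))
    (hpos : ∀ p ∈ S, 0 < p.1 (Fin.last n)) :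
    epiSet (envelope S) = {z | ∀ p ∈ S, p.2 ≤ ⟪z, p.1⟫} := by
  ext z
  rw [mem_epiSet_iff, envelope, ciSup_le_iff (hbdd _)]
  simp only [Subtype.forall, mem_ofPred_eq]
  exact forall₂_congr fun p hp => (le_inner_iff_halfSpaceFun_le (hpos p hp)).symm

lemma convexOn_envelope (hbdd : ∀ x, BddAbove (range fun p : S => halfSpaceFun p.1.1 p.1.2 x)) :
    ConvexOn ℝ univ (envelope S) := by
  refine ⟨convex_univ, fun x _ y _ a b ha hb hab => ciSup_le fun p => ?_⟩
  rw [halfSpaceFun_add_smul _ _ _ _ hab, smul_eq_mul, smul_eq_mul]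
  gcongr <;> exact le_ciSup (hbdd _) p

end Envelope

lemma exists_unit_inner_lt_of_notMem {E : Type*} [NormedAddCommGroup E] [InnerProductSpace ℝ E]
    [CompleteSpace E] {C : Set E} (hC : IsClosed C) (hconv : Convex ℝ C) (hne : C.Nonempty)
    {w : E} (hw : w ∉ C) : ∃ (u : E) (c : ℝ), ‖u‖ = 1 ∧ ⟪w, u⟫ < c ∧ ∀ z ∈ C, c < ⟪z, u⟫ := by
  obtain ⟨f, s, hfw, hfC⟩ := geometric_hahn_banach_point_closed hconv hC hw
  set v := (InnerProductSpace.toDual ℝ E).symm f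
  have hv (y : E) : ⟪y, v⟫ = f y := by
    rw [real_inner_comm]; exact InnerProductSpace.toDual_symm_apply
  have hv0 : v ≠ 0 := by
    obtain ⟨z, hz⟩ := hne
    intro h
    have hfz := hfC z hz
    rw [← hv, h, inner_zero_right] at hfz hfw
    linarith
  have hnorm : 0 < ‖v‖⁻¹ := inv_pos.2 (norm_pos_iff.2 hv0)
  refine ⟨‖v‖⁻¹ • v, ‖v‖⁻¹ * s, by simp [norm_smul, hv0], ?_, fun z hz => ?_⟩
  · rw [real_inner_smul_right, hv]
    exact mul_lt_mul_of_pos_left hfw hnorm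
  · rw [real_inner_smul_right, hv]
    exact mul_lt_mul_of_pos_left (hfC z hz) hnorm

section FloatingSet

variable {m : ℕ}

def floatingCaps (C : Set ℝ^m) (δ : ℝ) : Set (ℝ^m × ℝ) :=
  {p | ‖p.1‖ = 1 ∧ volume ({z | ⟪z, p.1⟫ ≤ p.2} ∩ C) ≤ ENNReal.ofReal δ}

lemma floatingSet_eq (C : Set ℝ^m) (δ : ℝ) :
    floatingSet C δ = {z | ∀ p ∈ floatingCaps C δ, p.2 ≤ ⟪z, p.1⟫} := by
  ext z
  simp only [floatingSet, mem_sInter, mem_ofPred_eq, floatingCaps, Prod.forall]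
  constructor
  · rintro h u c ⟨hu, hvol⟩
    exact h _ ⟨u, c, hu, rfl, hvol⟩
  · rintro h S ⟨u, c, hu, rfl, hvol⟩
    exact h u c ⟨hu, hvol⟩

variable {C : Set ℝ^m}

lemma exists_mem_floatingCaps_inner_lt (hC : IsClosed C) (hconv : Convex ℝ C) (hne : C.Nonempty)
    {w : ℝ^m} (hw : w ∉ C) (δ : ℝ) :
    ∃ p ∈ floatingCaps C δ, ⟪w, p.1⟫ < p.2 := by
  obtain ⟨u, c, hu, hwu, hCu⟩ := exists_unit_inner_lt_of_notMem hC hconv hne hw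
  have hcap : {z | ⟪z, u⟫ ≤ c} ∩ C = ∅ :=
    eq_empty_of_forall_notMem fun z ⟨hzu, hzC⟩ => (hCu z hzC).not_ge hzu
  exact ⟨(u, c), ⟨hu, by simp [hcap]⟩, hwu⟩

lemma floatingSet_subset (hC : IsClosed C) (hconv : Convex ℝ C) (hne : C.Nonempty) (δ : ℝ) : floatingSet C δ ⊆ C := by
  intro z hz
  by_contra hzC
  obtain ⟨p, hp, hlt⟩ := exists_mem_floatingCaps_inner_lt hC hconv hne hzC δ
  rw [floatingSet_eq] at hz
  exact (hz p hp).not_gt hlt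

end FloatingSet

section FloatingCapsOfEpigraph

variable {n : ℕ} {ψ : ℝ^n → ℝ} {δ : ℝ}

lemma pos_last_of_mem_floatingCaps (hψ : Continuous ψ) {p : ℝ^(n + 1) × ℝ}
    (hp : p ∈ floatingCaps (epiSet ψ) δ) : 0 < p.1 (Fin.last n) :=
  pos_last_of_volume_ne_top hψ hp.1 (ne_top_of_le_ne_top ENNReal.ofReal_ne_top hp.2)

lemma bddAbove_halfSpaceFun_floatingCaps (hψ : Continuous ψ) (x : ℝ^n) :
    BddAbove (range fun p : floatingCaps (epiSet ψ) δ => halfSpaceFun p.1.1 p.1.2 x) := by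
  obtain ⟨M, hM⟩ := exists_ofReal_halfSpaceFun_sub_le_volume hψ x
  refine ⟨M + max δ 0, forall_mem_range.2 fun ⟨p, hp⟩ => ?_⟩
  rcases ENNReal.ofReal_le_ofReal_iff'.1
      ((hM _ _ (pos_last_of_mem_floatingCaps hψ hp)).trans hp.2) with h | h
  · linarith [le_max_left δ 0]
  · linarith [le_max_right δ 0]

lemma floatingCaps_epiSet_nonempty (hconv : ConvexOn ℝ univ ψ) (hψ : Continuous ψ) :
    (floatingCaps (epiSet ψ) δ).Nonempty := by
  have hw : snoc 0 (ψ 0 - 1) ∉ epiSet ψ := by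
    rw [snoc_mem_epiSet_iff]; linarith
  obtain ⟨p, hp, -⟩ := exists_mem_floatingCaps_inner_lt (isClosed_epiSet hψ) (convex_epiSet hconv)
    (epiSet_nonempty ψ) hw δ
  exact ⟨p, hp⟩

end FloatingCapsOfEpigraph

theorem exists_unique_floating_function_general
    (n : ℕ) (ψ : EuclideanSpace ℝ (Fin n) → ℝ)
    (hconv : ConvexOn ℝ Set.univ ψ)
    (δ : ℝ) :
    ∃! φ : EuclideanSpace ℝ (Fin n) → ℝ,
      ConvexOn ℝ Set.univ φ ∧ epiSet φ = floatingSet (epiSet ψ) δ ∧ ∀ x, ψ x ≤ φ x := by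
  have hψ : Continuous ψ := continuousOn_univ.mp (hconv.continuousOn isOpen_univ)
  set S := floatingCaps (epiSet ψ) δ
  have : Nonempty S := (floatingCaps_epiSet_nonempty hconv hψ).to_subtype
  have hbdd := bddAbove_halfSpaceFun_floatingCaps (δ := δ) hψ
  have hepi : epiSet (envelope S) = floatingSet (epiSet ψ) δ := by
    rw [epiSet_envelope hbdd fun p hp => pos_last_of_mem_floatingCaps hψ hp, floatingSet_eq]
  have hle : ∀ x, ψ x ≤ envelope S x := le_of_epiSet_subset <|
    hepi ▸ floatingSet_subset (isClosed_epiSet hψ) (convex_epiSet hconv) (epiSet_nonempty ψ) δ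
  exact ⟨envelope S, ⟨convexOn_envelope hbdd, hepi, hle⟩,
    fun φ hφ => epiSet_injective (hφ.2.1.trans hepi.symm)⟩

/-- If `(epi ψ)_δ` is nonempty, there is a unique convex function `ψ_δ : ℝⁿ → ℝ` with
`(epi ψ)_δ = epi ψ_δ`, and `ψ_δ ≥ ψ` pointwise. -/
theorem exists_unique_floating_function
    (n : ℕ) (ψ : EuclideanSpace ℝ (Fin n) → ℝ)
    (hconv : ConvexOn ℝ Set.univ ψ)
    (δ : ℝ) (hδ : 0 < δ)
    (hne : (floatingSet (epiSet ψ) δ).Nonempty) :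
    ∃! φ : EuclideanSpace ℝ (Fin n) → ℝ,
      ConvexOn ℝ Set.univ φ ∧ epiSet φ = floatingSet (epiSet ψ) δ ∧ ∀ x, ψ x ≤ φ x :=
  exists_unique_floating_function_general n ψ hconv δ
end

section
/- For a log concave function f = e^{-ψ} with ψ : ℝⁿ → ℝ twice differentiable convex, and an affine map A : ℝⁿ → ℝⁿ with det A ≠ 0, the affine surface area as(f) = ∫_{ℝⁿ} (det ∇²ψ(x))^{1/(n+2)} e^{-ψ(x)} dx satisfies as(f ∘ A) = |det A|^{-n/(n+2)} as(f). -/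
/-!
By the chain rule the Hessian of `ψ (L x + b)` is `Lᵀ (∇²ψ (L x + b)) L`, so its determinant
picks up the factor `(det L)²`, which becomes `|det L| ^ (2 / (n + 2))` under the power
`1 / (n + 2)`. The substitution `y = L x + b` contributes `|det L|⁻¹`, and
`2 / (n + 2) - 1 = -n / (n + 2)`.
-/

open MeasureTheory

/-- The determinant of the (generalized) Hessian `∇²ψ(x)`, defined as the determinant of the
derivative of the gradient of `ψ`. -/
noncomputable def hessianDet {n : ℕ} (ψ : EuclideanSpace ℝ (Fin n) → ℝ)
    (x : EuclideanSpace ℝ (Fin n)) : ℝ :=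
  LinearMap.det ((fderiv ℝ (gradient ψ) x :
    EuclideanSpace ℝ (Fin n) →L[ℝ] EuclideanSpace ℝ (Fin n)) :
      EuclideanSpace ℝ (Fin n) →ₗ[ℝ] EuclideanSpace ℝ (Fin n))

/-- For `y < 0`, `y ^ z` is `exp (log y * z) * cos (z * π)` with `log y = log |y|`, so a
nonnegative factor still splits off. -/
theorem Real.mul_rpow_of_nonneg {x : ℝ} (hx : 0 ≤ x) (y z : ℝ) :
    (x * y) ^ z = x ^ z * y ^ z := by
  rcases le_or_gt 0 y with hy | hy
  · exact Real.mul_rpow hx hy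
  rcases hx.eq_or_lt with rfl | hx
  · rcases eq_or_ne z 0 with rfl | hz <;> simp [Real.zero_rpow, *]
  · rw [Real.rpow_def_of_neg (mul_neg_of_pos_of_neg hx hy), Real.rpow_def_of_neg hy,
      Real.rpow_def_of_pos hx, Real.log_mul hx.ne' hy.ne, add_mul, Real.exp_add]
    ring

theorem LinearMap.det_adjoint {E : Type*} [NormedAddCommGroup E] [InnerProductSpace ℝ E]
    [FiniteDimensional ℝ E] (f : E →ₗ[ℝ] E) : (LinearMap.adjoint f).det = f.det := by
  let b := (stdOrthonormalBasis ℝ E).toBasis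
  rw [← LinearMap.det_toMatrix b, ← LinearMap.det_toMatrix b f,
    LinearMap.toMatrix_adjoint, Matrix.det_conjTranspose, star_trivial]

theorem MeasureTheory.Measure.integral_comp_linearMap_add_const {E F : Type*}
    [NormedAddCommGroup E] [NormedSpace ℝ E] [FiniteDimensional ℝ E] [MeasurableSpace E]
    [BorelSpace E] [NormedAddCommGroup F] [NormedSpace ℝ F] (μ : Measure E)
    [μ.IsAddHaarMeasure] (f : E → F) {L : E →L[ℝ] E} (hL : LinearMap.det (L : E →ₗ[ℝ] E) ≠ 0)
    (b : E) :
    ∫ x, f (L x + b) ∂μ = |LinearMap.det (L : E →ₗ[ℝ] E)|⁻¹ • ∫ y, f y ∂μ := by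
  let e := (L.toContinuousLinearEquivOfDetNeZero hL).toHomeomorph.toMeasurableEquiv
  have hmap : μ.map e = ENNReal.ofReal |(LinearMap.det (L : E →ₗ[ℝ] E))⁻¹| • μ :=
    map_linearMap_addHaar_eq_smul_addHaar μ hL
  calc ∫ x, f (L x + b) ∂μ = ∫ y, f (y + b) ∂(μ.map e) :=
        (integral_map_equiv e fun y => f (y + b)).symm
    _ = |LinearMap.det (L : E →ₗ[ℝ] E)|⁻¹ • ∫ y, f (y + b) ∂μ := by
      rw [hmap, integral_smul_measure, ENNReal.toReal_ofReal (abs_nonneg _), abs_inv]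
    _ = _ := by rw [integral_add_right_eq_self]

section Gradient

open InnerProductSpace

variable {E F : Type*} [NormedAddCommGroup E] [InnerProductSpace ℝ E] [CompleteSpace E]
  [NormedAddCommGroup F] [InnerProductSpace ℝ F] [CompleteSpace F]

theorem ContDiff.differentiable_gradient {ψ : F → ℝ} (hψ : ContDiff ℝ 2 ψ) :
    Differentiable ℝ (gradient ψ) :=
  ((toDual ℝ F).symm : StrongDual ℝ F ≃ₗᵢ[ℝ] F).differentiable.comp
    ((hψ.fderiv_right (m := 1) (by norm_num)).differentiable one_ne_zero)

theorem gradient_comp_affine {ψ : F → ℝ} (L : E →L[ℝ] F) (b : F) {x : E}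
    (hψ : DifferentiableAt ℝ ψ (L x + b)) :
    gradient (fun y => ψ (L y + b)) x = L.adjoint (gradient ψ (L x + b)) := by
  have hdual : toDual ℝ E (L.adjoint (gradient ψ (L x + b))) = fderiv ℝ ψ (L x + b) ∘L L := by
    ext v
    rw [toDual_apply_apply, ContinuousLinearMap.adjoint_inner_left, inner_gradient_left]
    rfl
  exact (hasGradientAt_iff_hasFDerivAt.mpr
    (hdual ▸ hψ.hasFDerivAt.comp x (L.hasFDerivAt.add_const b))).gradient

theorem fderiv_gradient_comp_affine {ψ : F → ℝ} (L : E →L[ℝ] F) (b : F) (x : E)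
    (hψ : Differentiable ℝ ψ) (hgrad : DifferentiableAt ℝ (gradient ψ) (L x + b)) :
    fderiv ℝ (gradient fun y => ψ (L y + b)) x =
      L.adjoint ∘L fderiv ℝ (gradient ψ) (L x + b) ∘L L := by
  have hgrad_comp : gradient (fun y => ψ (L y + b)) = fun y => L.adjoint (gradient ψ (L y + b)) :=
    funext fun y => gradient_comp_affine L b (hψ (L y + b))
  have hinner := hgrad.hasFDerivAt.comp x (L.hasFDerivAt.add_const b)
  rw [hgrad_comp]
  exact (L.adjoint.hasFDerivAt.comp x hinner).fderiv

end Gradient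

theorem hessianDet_comp_affine {n : ℕ} {ψ : EuclideanSpace ℝ (Fin n) → ℝ} (hψ : ContDiff ℝ 2 ψ)
    (L : EuclideanSpace ℝ (Fin n) →L[ℝ] EuclideanSpace ℝ (Fin n))
    (b x : EuclideanSpace ℝ (Fin n)) :
    hessianDet (fun y => ψ (L y + b)) x =
      LinearMap.det (L : EuclideanSpace ℝ (Fin n) →ₗ[ℝ] EuclideanSpace ℝ (Fin n)) ^ 2 *
        hessianDet ψ (L x + b) := by
  rw [hessianDet, hessianDet, fderiv_gradient_comp_affine L b x (hψ.differentiable (by norm_num))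
    (hψ.differentiable_gradient _), ContinuousLinearMap.toLinearMap_comp,
    ContinuousLinearMap.toLinearMap_comp, LinearMap.det_comp, LinearMap.det_comp,
    ← ContinuousLinearMap.adjoint_toLinearMap, LinearMap.det_adjoint]
  ring

theorem affineSurfaceArea_comp_affine_general
    (n : ℕ) (ψ : EuclideanSpace ℝ (Fin n) → ℝ)
    (hsm : ContDiff ℝ 2 ψ)
    (L : EuclideanSpace ℝ (Fin n) →L[ℝ] EuclideanSpace ℝ (Fin n))
    (b : EuclideanSpace ℝ (Fin n))
    (hdet : LinearMap.det (L : EuclideanSpace ℝ (Fin n) →ₗ[ℝ] EuclideanSpace ℝ (Fin n)) ≠ 0) :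
    ∫ x, (hessianDet (fun y => ψ (L y + b)) x) ^ (1 / ((n : ℝ) + 2)) *
        Real.exp (-ψ (L x + b))
      = |LinearMap.det (L : EuclideanSpace ℝ (Fin n) →ₗ[ℝ] EuclideanSpace ℝ (Fin n))| ^
          (-(n : ℝ) / ((n : ℝ) + 2)) *
        ∫ x, (hessianDet ψ x) ^ (1 / ((n : ℝ) + 2)) * Real.exp (-ψ x) := by
  set c := LinearMap.det (L : EuclideanSpace ℝ (Fin n) →ₗ[ℝ] EuclideanSpace ℝ (Fin n))
  set p : ℝ := 1 / ((n : ℝ) + 2) with hp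
  have hc : 0 < |c| := abs_pos.mpr hdet
  have hscale : |c| ^ (2 * p) * |c|⁻¹ = |c| ^ (-(n : ℝ) / ((n : ℝ) + 2)) := by
    rw [← Real.rpow_neg_one, ← Real.rpow_add hc]
    congr 1
    rw [hp]
    field_simp
    ring
  calc _ = ∫ x, |c| ^ (2 * p) * ((hessianDet ψ (L x + b)) ^ p * Real.exp (-ψ (L x + b))) := by
        congr 1 with x
        rw [hessianDet_comp_affine hsm, Real.mul_rpow_of_nonneg (sq_nonneg c), ← sq_abs,
          ← Real.rpow_natCast_mul (abs_nonneg c)]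
        push_cast
        ring
    _ = |c| ^ (2 * p) * (|c|⁻¹ * ∫ x, (hessianDet ψ x) ^ p * Real.exp (-ψ x)) := by
        rw [integral_const_mul, volume.integral_comp_linearMap_add_const
          (fun y => hessianDet ψ y ^ p * Real.exp (-ψ y)) hdet, smul_eq_mul]
    _ = _ := by rw [← mul_assoc, hscale]

/-- Affine invariance of the affine surface area of a log concave function `f = e^{-ψ}`:
for an affine map `A x = L x + b` with `det L ≠ 0`,
`as(f ∘ A) = |det L|^{-n/(n+2)} as(f)`. -/
theorem affineSurfaceArea_comp_affine
    (n : ℕ) (ψ : EuclideanSpace ℝ (Fin n) → ℝ)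
    (hconv : ConvexOn ℝ Set.univ ψ) (hsm : ContDiff ℝ 2 ψ)
    (L : EuclideanSpace ℝ (Fin n) →L[ℝ] EuclideanSpace ℝ (Fin n))
    (b : EuclideanSpace ℝ (Fin n))
    (hdet : LinearMap.det (L : EuclideanSpace ℝ (Fin n) →ₗ[ℝ] EuclideanSpace ℝ (Fin n)) ≠ 0) :
    ∫ x, (hessianDet (fun y => ψ (L y + b)) x) ^ (1 / ((n : ℝ) + 2)) *
        Real.exp (-ψ (L x + b))
      = |LinearMap.det (L : EuclideanSpace ℝ (Fin n) →ₗ[ℝ] EuclideanSpace ℝ (Fin n))| ^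
          (-(n : ℝ) / ((n : ℝ) + 2)) *
        ∫ x, (hessianDet ψ x) ^ (1 / ((n : ℝ) + 2)) * Real.exp (-ψ x) :=
  affineSurfaceArea_comp_affine_general n ψ hsm L b hdet
end
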